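/- Let λ₁, κ₁, λ₂, κ₂ ∈ 𝔽_q((T^{-1})) with Δ := |λ₁κ₂ − λ₂κ₁| > 0 and with λ₁ ≠ 0 and κ₁/λ₁ ∉ 𝔽_q(T), and set L_j(Q) := λ_j Q₁ + κ_j Q₂ for Q = (Q₁,Q₂) and j = 1,2. Then for all ρ₁, ρ₂ ∈ 𝔽_q((T^{-1})) and every k ∈ ℕ there exists Q ∈ 𝔽_q[T]² such that |L₁(Q) + ρ₁|·|L₂(Q) + ρ₂| ≤ q^{-2}·Δ and additionally |L₁(Q) + ρ₁| < q^{-k}. -/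

import Mathlib

open Polynomial Filter
open scoped Classical ENNReal

noncomputable section

variable (Fq : Type) [Field Fq] [Fintype Fq]

/-- The element `T` inside the Laurent-series field `𝔽_q((T⁻¹))`, which we realize
as the field of Hahn/Laurent series in the variable `T⁻¹`. -/
def Tel : LaurentSeries Fq := HahnSeries.single (-1 : ℤ) 1

/-- The inverse variable `T⁻¹` itself. -/
def TinvEl : LaurentSeries Fq := HahnSeries.single (1 : ℤ) 1

/-- The embedding of the polynomial ring `𝔽_q[T]` into `𝔽_q((T⁻¹))`,
sending `T` to `Tel`. -/
def polyToL (P : Polynomial Fq) : LaurentSeries Fq :=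
  Polynomial.eval₂ HahnSeries.C (Tel Fq) P

/-- The absolute value `|x| = q ^ (deg x)` on `𝔽_q((T⁻¹))`, with `|0| = 0`.
Here the degree of `x ≠ 0` is minus the order of `x` as a series in `T⁻¹`. -/
def labs (x : LaurentSeries Fq) : ℝ :=
  if x = 0 then 0 else (Fintype.card Fq : ℝ) ^ (-x.order)

/-- `‖x‖`: the distance from `x` to the nearest polynomial. -/
def lnorm (x : LaurentSeries Fq) : ℝ :=
  ⨅ P : Polynomial Fq, labs Fq (x - polyToL Fq P)

/-- `x ∈ 𝔽_q(T)`, i.e. `x` is rational. -/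
def IsRat (x : LaurentSeries Fq) : Prop :=
  ∃ P Q : Polynomial Fq, Q ≠ 0 ∧ polyToL Fq Q * x = polyToL Fq P

/-!
Write `θ = κ₁/λ₁`, `Δ = λ₁κ₂ - λ₂κ₁` and `σ = (λ₁ρ₂ - λ₂ρ₁)/Δ`, so that
`λ₁ L₂(Q) = λ₂ L₁(Q) + Δ (Q₂ + σ)`.

By linear algebra there are `Q₀ ≠ 0` of degree `≤ D` and `P₀` with `|θQ₀ - P₀| ≤ q^(-D-1)`;
since `θ` is irrational, `z = θQ₀ - P₀ ≠ 0`, say `|z| = q^(-n)` with `n > D`. If every `x`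
admits `|θQ - P + x| ≤ q^(-D-1)` with `|Q| ≤ q^(D-1)`, subtracting from the error `r` the
multiple `c z`, where `c` is the polynomial part of `r / z`, gives the same property at level `n`.
So this inhomogeneous approximation property holds for arbitrarily large `D`.

Apply it to `x = ρ₁/λ₁` with `Q₁ = -P`, `Q₂ = Q`: then `|L₁| ≤ |λ₁| q^(-D-1)` and
`|Q₂ + σ| ≤ q^(D-1)`, so the term `Δ (Q₂ + σ)` contributes at most `|λ₁| |Δ| q^(-2)` to
`|λ₁| |L₁| |L₂|`, while `λ₂ L₁` contributes `O(q^(-2D))`, which is smaller for large `D`.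
-/

section PolynomialEmbedding

variable {F : Type} [Field F]

@[simp]
lemma polyToL_zero : polyToL F 0 = 0 := eval₂_zero _ _

@[simp]
lemma polyToL_add (P Q : F[X]) : polyToL F (P + Q) = polyToL F P + polyToL F Q := eval₂_add _ _

@[simp]
lemma polyToL_sub (P Q : F[X]) : polyToL F (P - Q) = polyToL F P - polyToL F Q := eval₂_sub _

@[simp]
lemma polyToL_neg (P : F[X]) : polyToL F (-P) = -polyToL F P := eval₂_neg _

@[simp]
lemma polyToL_mul (P Q : F[X]) : polyToL F (P * Q) = polyToL F P * polyToL F Q := eval₂_mul _ _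

@[simp]
lemma polyToL_C (a : F) : polyToL F (C a) = HahnSeries.C a := eval₂_C _ _

lemma polyToL_monomial (n : ℕ) (a : F) :
    polyToL F (monomial n a) = HahnSeries.single (-(n : ℤ)) a := by
  rw [polyToL, eval₂_monomial, Tel, HahnSeries.single_pow, HahnSeries.C_apply,
    HahnSeries.single_mul_single]
  simp

lemma polyToL_coeff (P : F[X]) (i : ℤ) :
    (polyToL F P).coeff i = if i ≤ 0 then P.coeff (-i).toNat else 0 := by
  induction P using Polynomial.induction_on' with
  | add P Q hP hQ =>
    simp only [polyToL_add, HahnSeries.coeff_add, hP, hQ, coeff_add]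
    split_ifs <;> simp
  | monomial n a =>
    rw [polyToL_monomial, HahnSeries.coeff_single, coeff_monomial]
    split_ifs <;> first | rfl | omega

lemma polyToL_coeff_of_pos (P : F[X]) {i : ℤ} (hi : 0 < i) : (polyToL F P).coeff i = 0 := by
  rw [polyToL_coeff, if_neg hi.not_ge]

lemma exists_coeff_sub_polyToL_eq_zero (z : LaurentSeries F) :
    ∃ P : F[X], ∀ i ≤ 0, (z - polyToL F P).coeff i = 0 := by
  let N := (-z.order).toNat
  refine ⟨∑ n ∈ Finset.range (N + 1), monomial n (z.coeff (-n)), fun i hi => ?_⟩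
  simp only [HahnSeries.coeff_sub, polyToL_coeff, if_pos hi, finsetSum_coeff, coeff_monomial,
    Finset.sum_ite_eq', Finset.mem_range]
  split_ifs with h
  · rw [show -((-i).toNat : ℤ) = i by omega, sub_self]
  · rw [HahnSeries.coeff_eq_zero_of_lt_order (by omega), sub_zero]

lemma exists_polyToL_mul_sub_coeff_eq_zero (θ : LaurentSeries F) (m : ℕ) :
    ∃ Q ∈ degreeLT F (m + 1), Q ≠ 0 ∧
      ∃ P : F[X], ∀ i ≤ (m : ℤ), (θ * polyToL F Q - polyToL F P).coeff i = 0 := by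
  let Φ : degreeLT F (m + 1) →ₗ[F] (Fin m → F) :=
    { toFun := fun Q j => (θ * polyToL F Q).coeff ((j : ℤ) + 1)
      map_add' := fun Q Q' => by ext j; simp [mul_add]
      map_smul' := fun a Q => by
        ext j
        rw [SetLike.val_smul, smul_eq_C_mul, polyToL_mul, polyToL_C, mul_left_comm,
          HahnSeries.C_mul_eq_smul]
        rfl }
  have hker : LinearMap.ker Φ ≠ ⊥ := by
    have := (degreeLTEquiv F (m + 1)).symm.finiteDimensional
    exact LinearMap.ker_ne_bot_of_finrank_lt (by simp [(degreeLTEquiv F (m + 1)).finrank_eq])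
  obtain ⟨⟨Q, hQdeg⟩, hQker, hQ0⟩ := (Submodule.ne_bot_iff _).1 hker
  obtain ⟨P, hP⟩ := exists_coeff_sub_polyToL_eq_zero (θ * polyToL F Q)
  refine ⟨Q, hQdeg, by simpa using hQ0, P, fun i hi => ?_⟩
  rcases le_or_gt i 0 with hi0 | hi0
  · exact hP i hi0
  rw [HahnSeries.coeff_sub, polyToL_coeff_of_pos _ hi0, sub_zero]
  have hj : (θ * polyToL F Q).coeff (((i - 1).toNat : ℤ) + 1) = 0 :=
    congrFun hQker ⟨(i - 1).toNat, by omega⟩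
  rwa [show ((i - 1).toNat : ℤ) + 1 = i by omega] at hj

end PolynomialEmbedding

section

variable {Fq}

local notation "q" => (Fintype.card Fq : ℝ)

lemma one_lt_card_real : 1 < q := by exact_mod_cast Fintype.one_lt_card

lemma labs_nonneg (x : LaurentSeries Fq) : 0 ≤ labs Fq x := by
  unfold labs
  split_ifs <;> positivity

@[simp]
lemma labs_zero : labs Fq 0 = 0 := if_pos rfl

lemma labs_of_ne_zero {x : LaurentSeries Fq} (hx : x ≠ 0) : labs Fq x = q ^ (-x.order) :=
  if_neg hx

@[simp]
lemma labs_pos_iff {x : LaurentSeries Fq} : 0 < labs Fq x ↔ x ≠ 0 := by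
  refine ⟨fun h hx => by simp [hx] at h, fun hx => ?_⟩
  rw [labs_of_ne_zero hx]
  exact zpow_pos (zero_lt_one.trans one_lt_card_real) _

lemma labs_le_zpow_iff {x : LaurentSeries Fq} {n : ℤ} :
    labs Fq x ≤ q ^ (-n) ↔ ∀ i < n, x.coeff i = 0 := by
  rcases eq_or_ne x 0 with rfl | hx
  · simp only [labs_zero, HahnSeries.coeff_zero, implies_true, iff_true]
    positivity
  rw [labs_of_ne_zero hx, zpow_le_zpow_iff_right₀ one_lt_card_real, neg_le_neg_iff]
  refine ⟨fun h i hi => HahnSeries.coeff_eq_zero_of_lt_order (hi.trans_le h), fun h => ?_⟩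
  by_contra! hlt
  exact HahnSeries.coeff_order_eq_zero.not.2 hx (h _ hlt)

lemma labs_mul (x y : LaurentSeries Fq) : labs Fq (x * y) = labs Fq x * labs Fq y := by
  rcases eq_or_ne x 0 with rfl | hx
  · simp
  rcases eq_or_ne y 0 with rfl | hy
  · simp
  rw [labs_of_ne_zero hx, labs_of_ne_zero hy, labs_of_ne_zero (mul_ne_zero hx hy),
    HahnSeries.order_mul hx hy, neg_add, zpow_add₀ (zero_lt_one.trans one_lt_card_real).ne']

lemma labs_add_le (x y : LaurentSeries Fq) :
    labs Fq (x + y) ≤ max (labs Fq x) (labs Fq y) := by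
  rcases eq_or_ne x 0 with rfl | hx
  · simp [labs_nonneg]
  rcases eq_or_ne y 0 with rfl | hy
  · simp [labs_nonneg]
  rcases eq_or_ne (x + y) 0 with hxy | hxy
  · simp [hxy, labs_nonneg]
  have hmin := HahnSeries.min_order_le_order_add hxy
  rw [labs_of_ne_zero hx, labs_of_ne_zero hy, labs_of_ne_zero hxy]
  rcases le_total x.order y.order with h | h
  · exact le_max_of_le_left <| (zpow_le_zpow_iff_right₀ one_lt_card_real).2 (by
      rw [min_eq_left h] at hmin; omega)
  · exact le_max_of_le_right <| (zpow_le_zpow_iff_right₀ one_lt_card_real).2 (by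
      rw [min_eq_right h] at hmin; omega)

lemma labs_neg (x : LaurentSeries Fq) : labs Fq (-x) = labs Fq x := by
  simp [labs, HahnSeries.order_neg]

lemma labs_div (x y : LaurentSeries Fq) : labs Fq (x / y) = labs Fq x / labs Fq y := by
  rcases eq_or_ne y 0 with rfl | hy
  · simp
  rw [eq_div_iff (labs_pos_iff.2 hy).ne', ← labs_mul, div_mul_cancel₀ x hy]

lemma labs_sub_le (x y : LaurentSeries Fq) :
    labs Fq (x - y) ≤ max (labs Fq x) (labs Fq y) := by
  rw [sub_eq_add_neg, ← labs_neg y]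
  exact labs_add_le x (-y)

lemma labs_polyToL_le {P : Fq[X]} {m : ℕ} (hP : P ∈ degreeLT Fq (m + 1)) :
    labs Fq (polyToL Fq P) ≤ q ^ (m : ℤ) := by
  rw [← neg_neg (m : ℤ), labs_le_zpow_iff]
  intro i hi
  rw [polyToL_coeff, if_pos (by omega)]
  exact coeff_eq_zero_of_degree_lt <| (mem_degreeLT.1 hP).trans_le (by exact_mod_cast (by omega))

lemma exists_labs_sub_polyToL_le (z : LaurentSeries Fq) :
    ∃ P : Fq[X], labs Fq (z - polyToL Fq P) ≤ q ^ (-1 : ℤ) := by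
  obtain ⟨P, hP⟩ := exists_coeff_sub_polyToL_eq_zero z
  exact ⟨P, labs_le_zpow_iff.2 fun i hi => hP i (by omega)⟩

def InhomApprox (θ : LaurentSeries Fq) (D : ℕ) : Prop :=
  ∀ x : LaurentSeries Fq, ∃ Q P : Fq[X], labs Fq (polyToL Fq Q) ≤ q ^ ((D : ℤ) - 1) ∧
    labs Fq (θ * polyToL Fq Q - polyToL Fq P + x) ≤ q ^ (-((D : ℤ) + 1))

lemma inhomApprox_zero (θ : LaurentSeries Fq) : InhomApprox θ 0 := by
  intro x
  obtain ⟨P, hP⟩ := exists_labs_sub_polyToL_le x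
  refine ⟨0, P, by simp only [polyToL_zero, labs_zero]; positivity, ?_⟩
  rwa [polyToL_zero, mul_zero, zero_sub, neg_add_eq_sub]

lemma exists_labs_mul_sub_eq_zpow {θ : LaurentSeries Fq} (hθ : ¬ IsRat Fq θ) (D : ℕ) :
    ∃ Q₀ P₀ : Fq[X], ∃ n : ℕ, D < n ∧ labs Fq (polyToL Fq Q₀) ≤ q ^ (D : ℤ) ∧
      labs Fq (θ * polyToL Fq Q₀ - polyToL Fq P₀) = q ^ (-(n : ℤ)) := by
  obtain ⟨Q₀, hQ₀deg, hQ₀, P₀, hP₀⟩ := exists_polyToL_mul_sub_coeff_eq_zero θ D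
  set z := θ * polyToL Fq Q₀ - polyToL Fq P₀
  have hz : z ≠ 0 := fun h => hθ ⟨P₀, Q₀, hQ₀, by rw [mul_comm, ← sub_eq_zero]; exact h⟩
  have hDz : (D : ℤ) < z.order := by
    by_contra! h
    exact HahnSeries.coeff_order_eq_zero.not.2 hz (hP₀ _ h)
  refine ⟨Q₀, P₀, z.order.toNat, by omega, labs_polyToL_le hQ₀deg, ?_⟩
  rw [labs_of_ne_zero hz, Int.toNat_of_nonneg (by omega)]

lemma InhomApprox.of_labs_mul_sub_eq_zpow {θ : LaurentSeries Fq} {D n : ℕ}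
    (hD : InhomApprox θ D) (hDn : D < n) {Q₀ P₀ : Fq[X]}
    (hQ₀ : labs Fq (polyToL Fq Q₀) ≤ q ^ (D : ℤ))
    (hz : labs Fq (θ * polyToL Fq Q₀ - polyToL Fq P₀) = q ^ (-(n : ℤ))) :
    InhomApprox θ n := by
  have hq := one_lt_card_real (Fq := Fq)
  have hq0 : q ≠ 0 := by positivity
  set z := θ * polyToL Fq Q₀ - polyToL Fq P₀
  have hz0 : z ≠ 0 := labs_pos_iff.1 (hz ▸ by positivity)
  intro x
  obtain ⟨Q, P, hQ, hr⟩ := hD x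
  set r := θ * polyToL Fq Q - polyToL Fq P + x
  obtain ⟨c, hc⟩ := exists_labs_sub_polyToL_le (r / z)
  have hrz : labs Fq (r / z) ≤ q ^ ((n : ℤ) - D - 1) := by
    rw [labs_div, hz, div_le_iff₀ (by positivity), ← zpow_add₀ hq0,
      show (n : ℤ) - D - 1 + -n = -((D : ℤ) + 1) by ring]
    exact hr
  have hcn : labs Fq (polyToL Fq c) ≤ q ^ ((n : ℤ) - D - 1) :=
    calc labs Fq (polyToL Fq c) = labs Fq (r / z - (r / z - polyToL Fq c)) := by
          rw [sub_sub_cancel]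
      _ ≤ q ^ ((n : ℤ) - D - 1) :=
          (labs_sub_le _ _).trans (max_le hrz (hc.trans (zpow_le_zpow_right₀ hq.le (by omega))))
  refine ⟨Q - c * Q₀, P - c * P₀, ?_, ?_⟩
  · rw [polyToL_sub, polyToL_mul]
    refine (labs_sub_le _ _).trans (max_le (hQ.trans (zpow_le_zpow_right₀ hq.le (by omega))) ?_)
    calc labs Fq (polyToL Fq c * polyToL Fq Q₀) ≤ q ^ ((n : ℤ) - D - 1) * q ^ (D : ℤ) := by
          rw [labs_mul]
          exact mul_le_mul hcn hQ₀ (labs_nonneg _) (by positivity)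
      _ = q ^ ((n : ℤ) - 1) := by rw [← zpow_add₀ hq0]; ring_nf
  · have hcz : θ * polyToL Fq (Q - c * Q₀) - polyToL Fq (P - c * P₀) + x =
        z * (r / z - polyToL Fq c) := by
      rw [mul_sub, mul_div_cancel₀ r hz0]
      simp only [polyToL_sub, polyToL_mul, r, z]
      ring
    rw [hcz, labs_mul, hz]
    calc q ^ (-(n : ℤ)) * labs Fq (r / z - polyToL Fq c) ≤ q ^ (-(n : ℤ)) * q ^ (-1 : ℤ) := by
          gcongr
      _ = q ^ (-((n : ℤ) + 1)) := by rw [← zpow_add₀ hq0]; ring_nf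

lemma InhomApprox.exists_lt {θ : LaurentSeries Fq} (hθ : ¬ IsRat Fq θ) {D : ℕ}
    (hD : InhomApprox θ D) : ∃ n > D, InhomApprox θ n := by
  obtain ⟨Q₀, P₀, n, hDn, hQ₀, hz⟩ := exists_labs_mul_sub_eq_zpow hθ D
  exact ⟨n, hDn, hD.of_labs_mul_sub_eq_zpow hDn hQ₀ hz⟩

lemma frequently_inhomApprox {θ : LaurentSeries Fq} (hθ : ¬ IsRat Fq θ) :
    ∃ᶠ D in atTop, InhomApprox θ D := by
  refine frequently_atTop.2 fun a => ?_
  induction a with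
  | zero => exact ⟨0, le_rfl, inhomApprox_zero θ⟩
  | succ a ih =>
    obtain ⟨b, hab, hb⟩ := ih
    obtain ⟨n, hbn, hn⟩ := hb.exists_lt hθ
    exact ⟨n, by omega, hn⟩

lemma labs_add_mul_le {x y : LaurentSeries Fq} {s c : ℝ} (hs : 0 ≤ s)
    (hx : labs Fq x * s ≤ c) (hy : labs Fq y * s ≤ c) : labs Fq (x + y) * s ≤ c := by
  refine (mul_le_mul_of_nonneg_right (labs_add_le x y) hs).trans ?_
  rw [max_mul_of_nonneg _ _ hs]
  exact max_le hx hy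

lemma labs_mul_labs_le_of_mul_eq {lam1 lam2 Δ a1 a2 y : LaurentSeries Fq} {s c : ℝ}
    (h : lam1 * a2 = lam2 * a1 + Δ * y) (hlam1 : lam1 ≠ 0)
    (ha1 : labs Fq a1 ≤ labs Fq lam1 * s) (hy : labs Fq y * s ≤ c)
    (hlam2 : labs Fq lam2 * labs Fq lam1 * s ^ 2 ≤ labs Fq Δ * c) :
    labs Fq a1 * labs Fq a2 ≤ labs Fq Δ * c := by
  have h0 := labs_nonneg a1
  have hs : 0 ≤ labs Fq lam1 * s := h0.trans ha1
  have := labs_nonneg lam1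
  have := labs_nonneg lam2
  have := labs_nonneg Δ
  have := labs_nonneg y
  refine le_of_mul_le_mul_left ?_ (labs_pos_iff.2 hlam1)
  calc labs Fq lam1 * (labs Fq a1 * labs Fq a2) = labs Fq a1 * labs Fq (lam1 * a2) := by
        rw [labs_mul]; ring
    _ ≤ labs Fq a1 * max (labs Fq lam2 * labs Fq a1) (labs Fq Δ * labs Fq y) := by
        rw [h, ← labs_mul lam2, ← labs_mul Δ]
        exact mul_le_mul_of_nonneg_left (labs_add_le _ _) h0
    _ ≤ labs Fq lam1 * (labs Fq Δ * c) := by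
        rw [mul_max_of_nonneg _ _ h0]
        refine max_le ?_ ?_
        · calc labs Fq a1 * (labs Fq lam2 * labs Fq a1)
                = labs Fq lam2 * (labs Fq a1 * labs Fq a1) := by ring
            _ ≤ labs Fq lam2 * (labs Fq lam1 * s * (labs Fq lam1 * s)) := by gcongr
            _ = labs Fq lam1 * (labs Fq lam2 * labs Fq lam1 * s ^ 2) := by ring
            _ ≤ labs Fq lam1 * (labs Fq Δ * c) := by gcongr
        · calc labs Fq a1 * (labs Fq Δ * labs Fq y)
                ≤ labs Fq lam1 * s * (labs Fq Δ * labs Fq y) := by gcongr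
            _ = labs Fq lam1 * (labs Fq Δ * (labs Fq y * s)) := by ring
            _ ≤ labs Fq lam1 * (labs Fq Δ * c) := by gcongr

end

lemma tendsto_zpow_neg_natCast_add_one {r : ℝ} (hr : 1 < r) :
    Tendsto (fun n : ℕ => r ^ (-((n : ℤ) + 1))) atTop (nhds 0) := by
  have := (tendsto_pow_atTop_nhds_zero_of_lt_one (inv_nonneg.2 (zero_le_one.trans hr.le))
    (inv_lt_one_of_one_lt₀ hr)).comp (tendsto_add_atTop_nat 1)
  refine this.congr fun n => ?_
  rw [Function.comp_apply, inv_pow, zpow_neg, ← zpow_natCast, Nat.cast_succ]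

/-- **Minkowski's theorem, refined form.** If moreover `κ₁/λ₁` is irrational,
then for every `k ∈ ℕ` the solution `Q` can be chosen with the additional
property `|L₁(Q) + ρ₁| < q⁻ᵏ`. -/
theorem stmt9 (lam1 kap1 lam2 kap2 : LaurentSeries Fq)
    (hΔ : 0 < labs Fq (lam1 * kap2 - lam2 * kap1))
    (hlam1 : lam1 ≠ 0) (hirr : ¬ IsRat Fq (kap1 / lam1))
    (ρ1 ρ2 : LaurentSeries Fq) (k : ℕ) :
    ∃ Q1 Q2 : Polynomial Fq,
      labs Fq (lam1 * polyToL Fq Q1 + kap1 * polyToL Fq Q2 + ρ1) *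
        labs Fq (lam2 * polyToL Fq Q1 + kap2 * polyToL Fq Q2 + ρ2) ≤
        labs Fq (lam1 * kap2 - lam2 * kap1) / (Fintype.card Fq : ℝ) ^ 2 ∧
      labs Fq (lam1 * polyToL Fq Q1 + kap1 * polyToL Fq Q2 + ρ1) <
        (Fintype.card Fq : ℝ) ^ (-(k : ℤ)) := by
  set q : ℝ := (Fintype.card Fq : ℝ)
  set Δ := lam1 * kap2 - lam2 * kap1
  set σ := (lam1 * ρ2 - lam2 * ρ1) / Δ
  have hq : 1 < q := one_lt_card_real
  have hs := tendsto_zpow_neg_natCast_add_one hq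
  obtain ⟨D, hD, hσ, hsmall, hk⟩ := ((frequently_inhomApprox hirr).and_eventually <|
    ((hs.const_mul (labs Fq σ)).eventually_le_const (u := (q ^ 2)⁻¹) (by simp; positivity)).and <|
    (((hs.pow 2).const_mul (labs Fq lam2 * labs Fq lam1)).eventually_le_const
      (u := labs Fq Δ * (q ^ 2)⁻¹) (by rw [zero_pow two_ne_zero, mul_zero]; positivity)).and <|
    (hs.const_mul (labs Fq lam1)).eventually_lt_const (u := q ^ (-(k : ℤ)))
      (by simp; positivity)).exists
  obtain ⟨Q, P, hQ, hw⟩ := hD (ρ1 / lam1)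
  have hL1 : labs Fq (lam1 * polyToL Fq (-P) + kap1 * polyToL Fq Q + ρ1) ≤
      labs Fq lam1 * q ^ (-((D : ℤ) + 1)) := by
    rw [show lam1 * polyToL Fq (-P) + kap1 * polyToL Fq Q + ρ1 =
        lam1 * (kap1 / lam1 * polyToL Fq Q - polyToL Fq P + ρ1 / lam1) by
      simp only [polyToL_neg]; field_simp; ring, labs_mul]
    exact mul_le_mul_of_nonneg_left hw (labs_nonneg _)
  have hQσ : labs Fq (polyToL Fq Q + σ) * q ^ (-((D : ℤ) + 1)) ≤ (q ^ 2)⁻¹ := by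
    refine labs_add_mul_le (by positivity)
      ((mul_le_mul_of_nonneg_right hQ (by positivity)).trans_eq ?_) hσ
    rw [← zpow_add₀ (by positivity), ← zpow_natCast, ← zpow_neg]
    congr 1
    ring
  refine ⟨-P, Q, ?_, hL1.trans_lt hk⟩
  rw [div_eq_mul_inv]
  refine labs_mul_labs_le_of_mul_eq ?_ hlam1 hL1 hQσ hsmall
  rw [mul_add Δ, mul_div_cancel₀ _ (labs_pos_iff.1 hΔ)]
  simp only [polyToL_neg, Δ]
  ring

end
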